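/- Let U ⊆ ℂ be a connected open set and let g_1, …, g_l : U → ℂ be holomorphic functions that are algebraically independent over the field of rational functions, i.e., there is no nonzero polynomial R(z, X_1, …, X_l) with complex coefficients such that R(z, g_1(z), …, g_l(z)) = 0 for all z ∈ U. Let Û ⊆ ℂ^{1+l} be a connected open neighborhood of the graph {(z, g_1(z), …, g_l(z)) : z ∈ U}, and let Φ : Û → ℂ be a holomorphic Nash algebraic function. If Φ(z, g_1(z), …, g_l(z)) = 0 for all z ∈ U, then Φ is identically zero on Û. -/
import Mathlib

/-- A function `H` is holomorphic Nash algebraic on an open set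
`V ⊆ ℂ^κ` if it is holomorphic on `V` and annihilated by a nonzero
polynomial `P(ξ₁, …, ξ_κ, X)`. -/
def NashAlgebraicOn {κ : ℕ} (H : (Fin κ → ℂ) → ℂ) (V : Set (Fin κ → ℂ)) : Prop :=
  DifferentiableOn ℂ H V ∧
  ∃ P : MvPolynomial (Fin (κ + 1)) ℂ, P ≠ 0 ∧
    ∀ ξ ∈ V, MvPolynomial.eval (Fin.snoc ξ (H ξ)) P = 0


open Metric in
/-- Identity theorem for holomorphic functions of several variables, via
restriction to complex lines: a function differentiable on an open preconnected
set that vanishes near one point vanishes on the whole set. -/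
theorem diffOn_eqOn_zero {E : Type*} [NormedAddCommGroup E] [NormedSpace ℂ E]
    {f : E → ℂ} {S : Set E} (hS : IsOpen S) (hSc : IsPreconnected S)
    (hf : DifferentiableOn ℂ f S) {x₀ : E} (hx₀ : x₀ ∈ S) (h0 : f =ᶠ[nhds x₀] 0) :
    Set.EqOn f 0 S := by
  let u := {x | f =ᶠ[nhds x] 0}
  suffices main : closure u ∩ S ⊆ u by
    have Su : S ⊆ u :=
      hSc.subset_of_closure_inter_subset isOpen_setOf_eventually_nhds ⟨x₀, hx₀, h0⟩ main
    intro z hz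
    simpa using mem_of_mem_nhds (Su hz)
  rintro x ⟨xu, xS⟩
  obtain ⟨r, hr, hball⟩ := Metric.isOpen_iff.1 hS x xS
  obtain ⟨τ, hτu, hτx⟩ : ∃ τ ∈ u, dist x τ < r / 8 :=
    Metric.mem_closure_iff.1 xu _ (by positivity)
  have key : ∀ y ∈ Metric.ball x (r / 8), f y = 0 := by
    intro y hy
    set L : ℂ → E := fun w => τ + w • (y - τ) with hL
    have hyτ : ‖y - τ‖ < r / 4 := by
      have h1 : dist y x < r / 8 := mem_ball.mp hy
      calc ‖y - τ‖ ≤ ‖y - x‖ + ‖x - τ‖ := norm_sub_le_norm_sub_add_norm_sub y x τ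
        _ = dist y x + dist x τ := by rw [dist_eq_norm, dist_eq_norm]
        _ < r / 8 + r / 8 := by linarith
        _ ≤ r / 4 := by linarith
    have hmap : ∀ w : ℂ, w ∈ Metric.ball (0 : ℂ) 3 → L w ∈ Metric.ball x r := by
      intro w hw
      have hw3 : ‖w‖ < 3 := by simpa [dist_eq_norm] using hw
      have : dist (L w) x ≤ dist τ x + ‖w • (y - τ)‖ := by
        calc dist (L w) x ≤ dist (L w) τ + dist τ x := dist_triangle _ _ _
          _ = ‖w • (y - τ)‖ + dist τ x := by
              simp [hL, dist_eq_norm]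
          _ = dist τ x + ‖w • (y - τ)‖ := by ring
      have h2 : ‖w • (y - τ)‖ < 3 * (r / 4) := by
        rw [norm_smul]
        have hn : (0:ℝ) ≤ ‖y - τ‖ := norm_nonneg _
        calc ‖w‖ * ‖y - τ‖ ≤ 3 * ‖y - τ‖ := by nlinarith
          _ < 3 * (r / 4) := by nlinarith
      have h3 : dist τ x < r / 8 := by rw [dist_comm]; exact hτx
      have : dist (L w) x < r / 8 + 3 * (r / 4) := by linarith
      exact mem_ball.mpr (by linarith)
    have hLd : Differentiable ℂ L := by
      apply differentiable_const _ |>.add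
      exact (differentiable_id.smul_const (y - τ))
    have hg : DifferentiableOn ℂ (f ∘ L) (Metric.ball (0 : ℂ) 3) := by
      intro w hw
      have hfw : DifferentiableAt ℂ f (L w) :=
        hf.differentiableAt (hS.mem_nhds (hball (hmap w hw)))
      exact (hfw.comp w (hLd w)).differentiableWithinAt
    have hL0 : L 0 = τ := by simp [hL]
    have hg0 : (f ∘ L) =ᶠ[nhds (0 : ℂ)] 0 := by
      have hcont : Filter.Tendsto L (nhds (0 : ℂ)) (nhds τ) := by
        simpa [hL0] using (hLd.continuous.tendsto (0 : ℂ))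
      filter_upwards [hcont.eventually hτu] with w hw
      simpa using hw
    have han : AnalyticOnNhd ℂ (f ∘ L) (Metric.ball (0 : ℂ) 3) :=
      hg.analyticOnNhd Metric.isOpen_ball
    have hEq := han.eqOn_zero_of_preconnected_of_eventuallyEq_zero
      (convex_ball (0 : ℂ) 3).isPreconnected
      (Metric.mem_ball_self (by norm_num)) hg0
    have h1 : (1 : ℂ) ∈ Metric.ball (0 : ℂ) 3 := by
      norm_num [dist_eq_norm]
    have := hEq h1
    simpa [hL] using this
  have hmem : Metric.ball x (r / 8) ∈ nhds x := Metric.ball_mem_nhds x (by positivity)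
  show f =ᶠ[nhds x] 0
  filter_upwards [hmem] with z hz
  simpa using key z hz

open MvPolynomial in
/-- Key induction: if `Φ` is continuous-on an open connected set and is not
identically zero, each coefficient of an annihilating polynomial (in the extra
variable) vanishes on the graph; together with algebraic independence this
forces the polynomial to be zero. -/
theorem nashAlgebraic_aux
    (U : Set ℂ) (l : ℕ) (g : Fin l → ℂ → ℂ)
    (hc : ∀ c : MvPolynomial (Fin (l + 1)) ℂ,
      (∀ z ∈ U, MvPolynomial.eval (Fin.cons z (fun i => g i z)) c = 0) → c = 0)
    (Uhat : Set (Fin (l + 1) → ℂ)) (hUhato : IsOpen Uhat) (hUhatc : IsConnected Uhat)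
    (hgraph : ∀ z ∈ U, (Fin.cons z (fun i => g i z) : Fin (l + 1) → ℂ) ∈ Uhat)
    (Φ : (Fin (l + 1) → ℂ) → ℂ) (hΦd : DifferentiableOn ℂ Φ Uhat)
    (hne : ∃ ξ₀ ∈ Uhat, Φ ξ₀ ≠ 0)
    (hΦ0 : ∀ z ∈ U, Φ (Fin.cons z (fun i => g i z)) = 0) :
    ∀ (n : ℕ) (q : Polynomial (MvPolynomial (Fin (l + 1)) ℂ)), q.natDegree ≤ n →
      (∀ ξ ∈ Uhat, Polynomial.eval (Φ ξ) (q.map (MvPolynomial.eval ξ)) = 0) → q = 0 := by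
  have hΦcont : ContinuousOn Φ Uhat := hΦd.continuousOn
  intro n
  induction n with
  | zero =>
    intro q hdeg hv
    have hq : q = Polynomial.C (q.coeff 0) := (Polynomial.eq_C_of_natDegree_eq_zero
      (Nat.le_zero.mp hdeg))
    have hc0 : q.coeff 0 = 0 := by
      apply hc
      intro z hz
      have h1 := hv _ (hgraph z hz)
      rw [hΦ0 z hz] at h1
      simpa [Polynomial.coeff_map, Polynomial.coeff_zero_eq_eval_zero] using h1
    rw [hq, hc0, map_zero]
  | succ n ih =>
    intro q hdeg hv
    -- the constant coefficient vanishes on the graph, hence is zero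
    have hc0 : q.coeff 0 = 0 := by
      apply hc
      intro z hz
      have h1 := hv _ (hgraph z hz)
      rw [hΦ0 z hz] at h1
      simpa [Polynomial.coeff_map, Polynomial.coeff_zero_eq_eval_zero] using h1
    have hqX : q = Polynomial.X * q.divX := by
      conv_lhs => rw [← Polynomial.X_mul_divX_add q]
      rw [hc0, map_zero, add_zero]
    -- the function `h` given by evaluating `divX q`
    set r : Polynomial (MvPolynomial (Fin (l + 1)) ℂ) := q.divX with hr
    set h : (Fin (l + 1) → ℂ) → ℂ :=
      fun ξ => Polynomial.eval (Φ ξ) (r.map (MvPolynomial.eval ξ)) with hh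
    have hmul : ∀ ξ ∈ Uhat, Φ ξ * h ξ = 0 := by
      intro ξ hξ
      have := hv ξ hξ
      rw [hqX] at this
      simpa [hh, Polynomial.eval_mul] using this
    -- `h` vanishes on `Uhat` by continuity and density of `{Φ ≠ 0}`
    have hzero : ∀ ξ ∈ Uhat, h ξ = 0 := by
      intro ξ hξ
      -- continuity of `h` at `ξ`
      have hRrep : ∀ x, h x =
          MvPolynomial.eval (Fin.cons (Φ x) x)
            ((MvPolynomial.finSuccEquiv ℂ (l + 1)).symm r) := by
        intro x
        rw [MvPolynomial.eval_eq_eval_mv_eval']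
        simp [hh]
      have hcontpt : ContinuousAt (fun x => (Fin.cons (Φ x) x : Fin (l + 2) → ℂ)) ξ := by
        apply continuousAt_pi.2
        intro i
        refine Fin.cases ?_ ?_ i
        · simpa using (hΦcont.continuousAt (hUhato.mem_nhds hξ))
        · intro j
          simpa using (continuous_apply j).continuousAt (x := ξ)
      have hhc : ContinuousAt h ξ := by
        have := (MvPolynomial.continuous_eval
          (p := (MvPolynomial.finSuccEquiv ℂ (l + 1)).symm r)).continuousAt.comp hcontpt
        exact this.congr (Filter.Eventually.of_forall fun x => (hRrep x).symm)
      -- `Φ` is frequently nonzero near `ξ`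
      have hfreq : ∃ᶠ x in nhds ξ, Φ x ≠ 0 := by
        by_contra hcon
        rw [Filter.not_frequently] at hcon
        have hev : Φ =ᶠ[nhds ξ] 0 := by
          filter_upwards [hcon] with x hx
          simpa using not_not.mp hx
        obtain ⟨ξ₀, hξ₀, hΦξ₀⟩ := hne
        exact hΦξ₀ (diffOn_eqOn_zero hUhato hUhatc.isPreconnected hΦd hξ hev hξ₀)
      have hfreq2 : ∃ᶠ x in nhds ξ, h x = 0 := by
        have hU : ∀ᶠ x in nhds ξ, x ∈ Uhat := hUhato.eventually_mem hξ
        refine (hfreq.and_eventually hU).mono ?_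
        rintro x ⟨hx1, hx2⟩
        have := hmul x hx2
        rcases mul_eq_zero.mp this with h' | h'
        · exact absurd h' hx1
        · exact h'
      exact tendsto_nhds_unique_of_frequently_eq hhc tendsto_const_nhds hfreq2
    -- apply the induction hypothesis to `divX q`
    have hrdeg : r.natDegree ≤ n := by
      have h1 : r.natDegree = q.natDegree - 1 := by
        rw [hr]; exact q.natDegree_divX_eq_natDegree_tsub_one
      omega
    have hr0 : r = 0 := ih r hrdeg hzero
    rw [hqX, hr0, mul_zero]

/-- A holomorphic Nash algebraic function `Φ` on a connected
open neighborhood `Û ⊆ ℂ^{1+l}` of the graph of an (over the rational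
functions) algebraically independent family `g_1, …, g_l` of holomorphic
functions on a connected open `U ⊆ ℂ`, vanishing along that graph, vanishes
identically on `Û`. -/
theorem nashAlgebraic_vanishing_on_graph
    (U : Set ℂ) (hUo : IsOpen U) (hUc : IsConnected U)
    (l : ℕ) (g : Fin l → ℂ → ℂ) (hg : ∀ i, DifferentiableOn ℂ (g i) U)
    (hindep : ¬ ∃ R : MvPolynomial (Fin (l + 1)) ℂ, R ≠ 0 ∧
      ∀ z ∈ U, MvPolynomial.eval (Fin.cons z (fun i => g i z)) R = 0)
    (Uhat : Set (Fin (l + 1) → ℂ)) (hUhato : IsOpen Uhat) (hUhatc : IsConnected Uhat)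
    (hgraph : ∀ z ∈ U, (Fin.cons z (fun i => g i z) : Fin (l + 1) → ℂ) ∈ Uhat)
    (Φ : (Fin (l + 1) → ℂ) → ℂ)
    (hΦ : NashAlgebraicOn Φ Uhat)
    (hΦ0 : ∀ z ∈ U, Φ (Fin.cons z (fun i => g i z)) = 0) :
    ∀ ξ ∈ Uhat, Φ ξ = 0 := by
  by_contra hcon
  push_neg at hcon
  obtain ⟨hΦd, P, hP0, hPv⟩ := hΦ
  have hc : ∀ c : MvPolynomial (Fin (l + 1)) ℂ,
      (∀ z ∈ U, MvPolynomial.eval (Fin.cons z (fun i => g i z)) c = 0) → c = 0 := by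
    intro c hcv
    by_contra hc0
    exact hindep ⟨c, hc0, hcv⟩
  -- move the last variable to the front
  set Q : MvPolynomial (Fin (l + 2)) ℂ := MvPolynomial.rename (finRotate (l + 2)) P with hQ
  have hQ0 : Q ≠ 0 := fun h => hP0
    (MvPolynomial.rename_injective _ (finRotate (l + 2)).injective (by simpa using h))
  have hQv : ∀ ξ ∈ Uhat, MvPolynomial.eval (Fin.cons (Φ ξ) ξ) Q = 0 := by
    intro ξ hξ
    rw [hQ, MvPolynomial.eval_rename]
    have : ((Fin.cons (Φ ξ) ξ : Fin (l + 2) → ℂ) ∘ (finRotate (l + 2)))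
        = Fin.snoc ξ (Φ ξ) := by
      rw [Fin.snoc_eq_cons_rotate]
      rfl
    rw [this]
    exact hPv ξ hξ
  set q := MvPolynomial.finSuccEquiv ℂ (l + 1) Q with hq
  have hqv : ∀ ξ ∈ Uhat, Polynomial.eval (Φ ξ) (q.map (MvPolynomial.eval ξ)) = 0 := by
    intro ξ hξ
    rw [← MvPolynomial.eval_eq_eval_mv_eval']
    exact hQv ξ hξ
  have hqz : q = 0 :=
    nashAlgebraic_aux U l g hc Uhat hUhato hUhatc hgraph Φ hΦd hcon hΦ0 q.natDegree q le_rfl hqv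
  apply hQ0
  have := congrArg (MvPolynomial.finSuccEquiv ℂ (l + 1)).symm hqz
  rw [hq, AlgEquiv.symm_apply_apply] at this
  simpa using this
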